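/- arXiv:1410.5297 — 2 statements merged into one kernel-verified Lean document; each statement's English description precedes it below -/
import Mathlib

section
/- Let u = w t^s and v = x t^r be elements of G = Z^n ⋊_φ Z in normal form. If u and v are conjugate in G, then s = r, and there exists e ∈ Z such that φ^e(w) and x are twisted conjugate by φ^s in Z^n, i.e., there exists b ∈ Z^n with x = b + φ^e(w) − φ^s(b). -/
open Matrix

def mAut {n : ℕ} (M : (Matrix (Fin n) (Fin n) ℤ)ˣ) : (Fin n → ℤ) ≃+ (Fin n → ℤ) where
  toFun v := (M : Matrix (Fin n) (Fin n) ℤ) *ᵥ v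
  invFun v := (↑M⁻¹ : Matrix (Fin n) (Fin n) ℤ) *ᵥ v
  left_inv v := by simp [Matrix.mulVec_mulVec]
  right_inv v := by simp [Matrix.mulVec_mulVec]
  map_add' u v := by simp [Matrix.mulVec_add]

def tAct {n : ℕ} (M : (Matrix (Fin n) (Fin n) ℤ)ˣ) :
    Multiplicative ℤ →* MulAut (Multiplicative (Fin n → ℤ)) :=
  zpowersHom _ (AddEquiv.toMultiplicative (mAut M))

abbrev G (n : ℕ) (M : (Matrix (Fin n) (Fin n) ℤ)ˣ) :=
  SemidirectProduct (Multiplicative (Fin n → ℤ)) (Multiplicative ℤ) (tAct M)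

def nf {n : ℕ} (M : (Matrix (Fin n) (Fin n) ℤ)ˣ) (w : Fin n → ℤ) (k : ℤ) : G n M :=
  SemidirectProduct.inl (Multiplicative.ofAdd w) * SemidirectProduct.inr (Multiplicative.ofAdd k)

/-! Write a conjugator as `c = b t^e`. Projecting `c u = v c` onto the abelian quotient `ℤ` gives
`s = r`; projecting it onto `ℤ^n` gives `b + φ^e(w) = x + φ^s(b)`. -/

namespace SemidirectProduct

variable {N H : Type*} [Group N]

theorem right_eq_of_isConj [CommGroup H] {φ : H →* MulAut N} {u v : N ⋊[φ] H}
    (h : IsConj u v) : u.right = v.right :=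
  isConj_iff_eq.mp (rightHom.map_isConj h)

theorem exists_left_eq_of_isConj [Group H] {φ : H →* MulAut N} {u v : N ⋊[φ] H}
    (h : IsConj u v) :
    ∃ g : N ⋊[φ] H, v.left = g.left * φ g.right u.left * (φ v.right g.left)⁻¹ := by
  obtain ⟨g, hg⟩ := h
  refine ⟨g, eq_mul_inv_of_mul_eq ?_⟩
  simpa only [mul_left] using (congrArg left hg.eq).symm

end SemidirectProduct

def mulVecMulAut (n : ℕ) :
    (Matrix (Fin n) (Fin n) ℤ)ˣ →* MulAut (Multiplicative (Fin n → ℤ)) where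
  toFun M := AddEquiv.toMultiplicative (mAut M)
  map_one' := by ext; simp [mAut]
  map_mul' M N := by ext; simp [mAut, mulVec_mulVec]

section

variable {n : ℕ} (M : (Matrix (Fin n) (Fin n) ℤ)ˣ)

theorem tAct_eq : tAct M = (mulVecMulAut n).comp (zpowersHom _ M) :=
  MonoidHom.ext_mint (by ext; simp [tAct, mulVecMulAut])

theorem tAct_apply (k : Multiplicative ℤ) (a : Multiplicative (Fin n → ℤ)) :
    tAct M k a = .ofAdd ((↑(M ^ k.toAdd) : Matrix (Fin n) (Fin n) ℤ) *ᵥ a.toAdd) := by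
  rw [tAct_eq]; rfl

@[simp] theorem nf_left (w : Fin n → ℤ) (k : ℤ) : (nf M w k).left = .ofAdd w := by
  simp [nf]

@[simp] theorem nf_right (w : Fin n → ℤ) (k : ℤ) : (nf M w k).right = .ofAdd k := by
  simp [nf]

end

/-- If u = w t^s and v = x t^r are conjugate in G, then s = r and φ^e(w) ∼_{φ^s} x for some e. -/
theorem conj_imp_twisted {n : ℕ} (M : (Matrix (Fin n) (Fin n) ℤ)ˣ)
    (w x : Fin n → ℤ) (s r : ℤ) (h : IsConj (nf M w s) (nf M x r)) :
    s = r ∧ ∃ e : ℤ, ∃ b : Fin n → ℤ,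
      x = b + (↑(M ^ e) : Matrix (Fin n) (Fin n) ℤ) *ᵥ w
            - (↑(M ^ s) : Matrix (Fin n) (Fin n) ℤ) *ᵥ b := by
  have hsr : s = r := by simpa using SemidirectProduct.right_eq_of_isConj h
  subst hsr
  obtain ⟨g, hg⟩ := SemidirectProduct.exists_left_eq_of_isConj h
  refine ⟨rfl, g.right.toAdd, g.left.toAdd, ?_⟩
  simpa [tAct_apply, sub_eq_add_neg] using congrArg Multiplicative.toAdd hg
end

section
/- Let G = Z^n ⋊_φ Z and u = w t^s, v = x t^s in normal form with s ≠ 0. Then u and v are conjugate in G if and only if there exist e ∈ {0, 1, ..., |s|−1} and b ∈ Z^n such that x − φ^e(w) = (Id_n − φ^s)(b); moreover in that case b t^e conjugates u to v. -/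
open Matrix

/-!
Every element of `G` is `b t^e`, and `b t^e` conjugates `w t^s` to `x t^s` exactly when
`x - φ^e(w) = (Id - φ^s)(b)`. Multiplying a conjugator on the right by `w t^s` keeps it a
conjugator and replaces `(b, e)` by `(b + φ^e(w), e + s)`, so `e` can be reduced modulo `s`.
-/

def mulAutOfUnits (n : ℕ) : (Matrix (Fin n) (Fin n) ℤ)ˣ →* MulAut (Multiplicative (Fin n → ℤ)) where
  toFun M := AddEquiv.toMultiplicative (mAut M)
  map_one' := by ext v; simp [mAut]
  map_mul' M N := by ext v; simp [mAut, Matrix.mulVec_mulVec]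

lemma tAct_ofAdd_apply {n : ℕ} (M : (Matrix (Fin n) (Fin n) ℤ)ˣ) (k : ℤ) (v : Fin n → ℤ) :
    tAct M (.ofAdd k) (.ofAdd v) = .ofAdd ((↑(M ^ k) : Matrix (Fin n) (Fin n) ℤ) *ᵥ v) := by
  change (mulAutOfUnits n M ^ k) _ = _
  rw [← map_zpow]
  rfl

section SemidirectProduct

variable {n : ℕ} (M : (Matrix (Fin n) (Fin n) ℤ)ˣ)

lemma exists_eq_nf (g : G n M) : ∃ b k, g = nf M b k :=
  ⟨g.left.toAdd, g.right.toAdd, (SemidirectProduct.inl_left_mul_inr_right g).symm⟩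

lemma nf_eq_nf_iff {a a' : Fin n → ℤ} {k k' : ℤ} : nf M a k = nf M a' k' ↔ a = a' ∧ k = k' := by
  refine ⟨fun h => ?_, fun ⟨ha, hk⟩ => ha ▸ hk ▸ rfl⟩
  simpa [nf] using congrArg (fun g : G n M => (g.left, g.right)) h

lemma nf_mul (a b : Fin n → ℤ) (k l : ℤ) :
    nf M a k * nf M b l = nf M (a + (↑(M ^ k) : Matrix (Fin n) (Fin n) ℤ) *ᵥ b) (k + l) := by
  ext <;> simp [nf, tAct_ofAdd_apply]

lemma nf_conj_eq_nf_iff (b w x : Fin n → ℤ) (e s : ℤ) :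
    nf M b e * nf M w s * (nf M b e)⁻¹ = nf M x s ↔
      x - (↑(M ^ e) : Matrix (Fin n) (Fin n) ℤ) *ᵥ w
        = b - (↑(M ^ s) : Matrix (Fin n) (Fin n) ℤ) *ᵥ b := by
  rw [mul_inv_eq_iff_eq_mul, nf_mul, nf_mul, nf_eq_nf_iff, add_comm s e, and_iff_left rfl,
    sub_eq_sub_iff_add_eq_add, eq_comm]

end SemidirectProduct

section LinearSystem

variable {ι R : Type*} [Fintype ι] [DecidableEq ι] [Ring R]

def HasConjSolution (M : (Matrix ι ι R)ˣ) (w x : ι → R) (s e : ℤ) : Prop :=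
  ∃ b, x - (↑(M ^ e) : Matrix ι ι R) *ᵥ w = b - (↑(M ^ s) : Matrix ι ι R) *ᵥ b

lemma hasConjSolution_add_iff {M : (Matrix ι ι R)ˣ} {w x : ι → R} {s e : ℤ} :
    HasConjSolution M w x s (e + s) ↔ HasConjSolution M w x s e := by
  set c := (↑(M ^ e) : Matrix ι ι R) *ᵥ w
  have hc : (↑(M ^ s) : Matrix ι ι R) *ᵥ c = (↑(M ^ (e + s)) : Matrix ι ι R) *ᵥ w := by
    rw [mulVec_mulVec, ← Units.val_mul, ← _root_.zpow_add, add_comm s e]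
  have shift : ∀ b : ι → R,
      x - (↑(M ^ (e + s)) : Matrix ι ι R) *ᵥ w - ((b + c) - (↑(M ^ s) : Matrix ι ι R) *ᵥ (b + c))
        = x - c - (b - (↑(M ^ s) : Matrix ι ι R) *ᵥ b) := by
    intro b
    rw [mulVec_add, hc]
    abel
  constructor
  · rintro ⟨b, hb⟩
    refine ⟨b - c, ?_⟩
    rw [← sub_eq_zero, ← shift, sub_add_cancel, sub_eq_zero, hb]
  · rintro ⟨b, hb⟩
    refine ⟨b + c, ?_⟩
    rw [← sub_eq_zero, shift, hb, sub_self]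

lemma hasConjSolution_add_mul_iff {M : (Matrix ι ι R)ˣ} {w x : ι → R} {s e : ℤ} (m : ℤ) :
    HasConjSolution M w x s (e + m * s) ↔ HasConjSolution M w x s e := by
  induction m using Int.induction_on with
  | zero => simp
  | succ m ih => rw [add_one_mul, ← add_assoc, hasConjSolution_add_iff, ih]
  | pred m ih => rw [← ih, ← hasConjSolution_add_iff, sub_one_mul, add_sub, sub_add_cancel]


lemma exists_hasConjSolution_iff_exists_bounded {M : (Matrix ι ι R)ˣ} {w x : ι → R} {s : ℤ}
    (hs : s ≠ 0) :
    (∃ e, HasConjSolution M w x s e) ↔ ∃ e, 0 ≤ e ∧ e ≤ |s| - 1 ∧ HasConjSolution M w x s e := by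
  refine ⟨fun ⟨e, he⟩ => ⟨e % s, Int.emod_nonneg e hs, ?_, ?_⟩, fun ⟨e, _, _, he⟩ => ⟨e, he⟩⟩
  · have := Int.emod_lt_of_pos e (abs_pos.mpr hs)
    rw [Int.emod_abs] at this
    omega
  · rwa [Int.emod_def, sub_eq_add_neg, ← mul_neg, mul_comm, hasConjSolution_add_mul_iff]

end LinearSystem

lemma isConj_nf_iff {n : ℕ} (M : (Matrix (Fin n) (Fin n) ℤ)ˣ) (w x : Fin n → ℤ) (s : ℤ) :
    IsConj (nf M w s) (nf M x s) ↔ ∃ e, HasConjSolution M w x s e := by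
  rw [isConj_iff]
  constructor
  · rintro ⟨c, hc⟩
    obtain ⟨b, e, rfl⟩ := exists_eq_nf M c
    exact ⟨e, b, (nf_conj_eq_nf_iff M b w x e s).1 hc⟩
  · rintro ⟨e, b, hb⟩
    exact ⟨nf M b e, (nf_conj_eq_nf_iff M b w x e s).2 hb⟩

/-- For s ≠ 0, u = w t^s and v = x t^s are conjugate in G iff for some 0 ≤ e ≤ |s|-1 and
    b ∈ ℤ^n one has x - φ^e(w) = (Id - φ^s)(b); moreover b t^e then conjugates u to v. -/
theorem conj_iff_linear_system {n : ℕ} (M : (Matrix (Fin n) (Fin n) ℤ)ˣ)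
    (w x : Fin n → ℤ) (s : ℤ) (hs : s ≠ 0) :
    (IsConj (nf M w s) (nf M x s) ↔
      ∃ e : ℤ, 0 ≤ e ∧ e ≤ |s| - 1 ∧ ∃ b : Fin n → ℤ,
        x - (↑(M ^ e) : Matrix (Fin n) (Fin n) ℤ) *ᵥ w
          = b - (↑(M ^ s) : Matrix (Fin n) (Fin n) ℤ) *ᵥ b) ∧
    ∀ e : ℤ, ∀ b : Fin n → ℤ,
      x - (↑(M ^ e) : Matrix (Fin n) (Fin n) ℤ) *ᵥ w
          = b - (↑(M ^ s) : Matrix (Fin n) (Fin n) ℤ) *ᵥ b →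
      nf M b e * nf M w s * (nf M b e)⁻¹ = nf M x s :=
  ⟨(isConj_nf_iff M w x s).trans (exists_hasConjSolution_iff_exists_bounded hs),
    fun e b => (nf_conj_eq_nf_iff M b w x e s).2⟩
end
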